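/- Let m, n, p, q ≥ 2 be integers with m ≤ p and n ≤ q, let D be an EAS division ring, and let φ : M_{m×n}(D) → M_{p×q}(D) be an adjacency preserver that is not degenerate with respect to 0. For M ∈ M_{m×n}(D), write M̃ := [[M, 0],[0, 0]] ∈ M_{p×q}(D). Assume that φ(M) = M̃ for all M ∈ R(e₁) ∪ L(ᵗf₁), where e₁ ∈ D^n is the first standard basis row vector and ᵗf₁ ∈ ᵗD^m is the first standard basis column vector. Then φ(M) = M̃ for all M ∈ M_{m×n}(D). -/

import Mathlib

open Matrix

variable {D : Type*} [DivisionRing D]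

/-- The rank of a matrix over a division ring: the dimension of its row space,
i.e. of the left `D`-subspace of `D^n` spanned by the rows. -/
noncomputable def rowRank {m n : ℕ} (A : Matrix (Fin m) (Fin n) D) : ℕ :=
  Module.finrank D (Submodule.span D (Set.range fun i => A i))

/-- Two matrices are adjacent if their difference has rank one. -/
def Adjacent {m n : ℕ} (A B : Matrix (Fin m) (Fin n) D) : Prop :=
  rowRank (A - B) = 1

/-- `R(x)`: the set of matrices of the form `ᵗu x` for a fixed row vector `x`. -/
def Rvec {m n : ℕ} (x : Fin n → D) : Set (Matrix (Fin m) (Fin n) D) :=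
  { M | ∃ u : Fin m → D, ∀ i j, M i j = u i * x j }

/-- `L(ᵗy)`: the set of matrices of the form `ᵗy v` for a fixed column vector `ᵗy`. -/
def Lvec {m n : ℕ} (y : Fin m → D) : Set (Matrix (Fin m) (Fin n) D) :=
  { M | ∃ v : Fin n → D, ∀ i j, M i j = y i * v j }

/-- `R_d`: the matrices whose row space is contained in `d`. -/
def Rsub {m n : ℕ} (d : Submodule D (Fin n → D)) : Set (Matrix (Fin m) (Fin n) D) :=
  { M | ∀ i, M i ∈ d }

/-- `L_e`: the matrices whose column space (a right subspace, i.e. a `Dᵐᵒᵖ`-submodule)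
is contained in `e`. -/
def Lsub {m n : ℕ} (e : Submodule Dᵐᵒᵖ (Fin m → D)) : Set (Matrix (Fin m) (Fin n) D) :=
  { M | ∀ j, (fun i => M i j) ∈ e }

/-- The orthogonal set of a set `e` of column vectors. -/
def perpSet {m : ℕ} (e : Set (Fin m → D)) : Set (Fin m → D) :=
  { u | ∀ v ∈ e, ∑ i, u i * v i = 0 }

/-- The `p × q` matrix with upper-left block `B` and zeros elsewhere. -/
def pad {m n : ℕ} (p q : ℕ) (B : Matrix (Fin m) (Fin n) D) :
    Matrix (Fin p) (Fin q) D :=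
  Matrix.of fun i j =>
    if hi : (i : ℕ) < m then if hj : (j : ℕ) < n then B ⟨i, hi⟩ ⟨j, hj⟩ else 0 else 0

/-- `φ` is degenerate with respect to `A`. -/
def DegenerateAt {m n p q : ℕ} (φ : Matrix (Fin m) (Fin n) D → Matrix (Fin p) (Fin q) D)
    (A : Matrix (Fin m) (Fin n) D) : Prop :=
  ∃ x : Fin p → D, x ≠ 0 ∧ ∃ y : Fin q → D, y ≠ 0 ∧
    ∀ M : Matrix (Fin m) (Fin n) D, rowRank M ≤ 1 →
      φ (A + M) - φ A ∈ Rvec y ∪ Lvec x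

/-- `φ` is degenerate: degenerate with respect to every matrix. -/
def Degenerate {m n p q : ℕ} (φ : Matrix (Fin m) (Fin n) D → Matrix (Fin p) (Fin q) D) :
    Prop :=
  ∀ A, DegenerateAt φ A

/-- A map (sending `0` to `0`) is degenerate with respect to `0` iff it maps every matrix of
rank at most one into `R(y) ∪ L(ᵗx)` for some nonzero `y`, `x`. -/
def DegZero {m n p q : ℕ} (φ : Matrix (Fin m) (Fin n) D → Matrix (Fin p) (Fin q) D) :
    Prop :=
  ∃ x : Fin p → D, x ≠ 0 ∧ ∃ y : Fin q → D, y ≠ 0 ∧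
    ∀ M : Matrix (Fin m) (Fin n) D, rowRank M ≤ 1 → φ M ∈ Rvec y ∪ Lvec x

/-- A standard adjacency preserver. -/
def Standard {m n p q : ℕ} (φ : Matrix (Fin m) (Fin n) D → Matrix (Fin p) (Fin q) D) :
    Prop :=
  (m ≤ p ∧ n ≤ q ∧ ∃ τ : D ≃+* D, ∃ T : Matrix (Fin p) (Fin p) D,
    ∃ S : Matrix (Fin q) (Fin q) D, ∃ R : Matrix (Fin p) (Fin q) D,
    IsUnit T ∧ IsUnit S ∧ ∀ A, φ A = T * pad p q (A.map τ) * S + R) ∨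
  (n ≤ p ∧ m ≤ q ∧ ∃ σ : D → D, Function.Bijective σ ∧ σ 1 = 1 ∧
    (∀ a b, σ (a + b) = σ a + σ b) ∧ (∀ a b, σ (a * b) = σ b * σ a) ∧
    ∃ T : Matrix (Fin p) (Fin p) D, ∃ S : Matrix (Fin q) (Fin q) D,
    ∃ R : Matrix (Fin p) (Fin q) D, IsUnit T ∧ IsUnit S ∧
    ∀ A, φ A = T * pad p q (A.map σ).transpose * S + R)

/-- A division ring is EAS if every (unital) ring endomorphism of it is surjective. -/
def EAS (D : Type*) [DivisionRing D] : Prop :=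
  ∀ f : D →+* D, Function.Surjective f

/-- A set of matrices is adjacent if any two distinct members are adjacent. -/
def IsAdjacentSet {m n : ℕ} (S : Set (Matrix (Fin m) (Fin n) D)) : Prop :=
  ∀ A ∈ S, ∀ B ∈ S, A ≠ B → Adjacent A B

/-!
Rank-one matrices are written `u ⊗ᵥ v`; column vectors form a right vector space, i.e. a
`Dᵐᵒᵖ`-module, so "`u` and `w` are not parallel" reads `LinearIndependent Dᵐᵒᵖ ![u, w]`.

A generic `u ⊗ᵥ v` (neither `u` nor `v` parallel to `e₁`) is adjacent to the fixed matrices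
`u ⊗ᵥ e₁` and `e₁ ⊗ᵥ v`, so its image is `ũ ⊗ᵥ d • ṽ` or `e₁ ⊗ᵥ c • e₁`, where
`ũ = padVec p u`. The second alternative
spreads along adjacency to all generic matrices and makes `φ` degenerate. Comparing
`u ⊗ᵥ v + e₁ ⊗ᵥ e₁` with its fixed and generic neighbours forces `d = 1`, so `φ` fixes every
matrix of rank at most one. Then induct on the rank `r` of `M`: the defect `W = φ M - pad M`
satisfies `rank (W + pad X) = 1` for every rank-one `X` with `rank (M - X) < r`, and testing this
on the pieces of a decomposition `M = ∑ aₖ ⊗ᵥ bₖ` forces `W = 0`; for `r = 2` it leaves the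
alternative `φ M = 0`, which a neighbouring rank-two matrix rules out.
-/

open MulOpposite

local infixl:70 " ⊗ᵥ " => Matrix.vecMulVec

section Pair

variable {K V : Type*} [DivisionRing K] [AddCommGroup V] [Module K V] {x y z : V}

lemma not_linearIndependent_pair_smul (x : V) (c : K) : ¬ LinearIndependent K ![x, c • x] := by
  intro h
  simpa using (LinearIndependent.pair_iff.1 h c (-1) (by simp)).2

lemma exists_smul_eq_of_not_linearIndependent_pair (hx : x ≠ 0)
    (h : ¬ LinearIndependent K ![x, y]) : ∃ c : K, c • x = y := by
  simpa [LinearIndependent.pair_iff' hx] using h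

lemma not_linearIndependent_pair_trans (hy : y ≠ 0) (hxy : ¬ LinearIndependent K ![x, y])
    (hyz : ¬ LinearIndependent K ![y, z]) : ¬ LinearIndependent K ![x, z] := by
  rw [LinearIndependent.pair_symm_iff] at hxy
  obtain ⟨c, rfl⟩ := exists_smul_eq_of_not_linearIndependent_pair hy hxy
  obtain ⟨d, rfl⟩ := exists_smul_eq_of_not_linearIndependent_pair hy hyz
  rcases eq_or_ne c 0 with rfl | hc
  · rw [zero_smul]
    exact fun h => h.ne_zero 0 rfl
  · simpa [smul_smul, hc] using not_linearIndependent_pair_smul (c • y) (d * c⁻¹)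

lemma ne_of_linearIndependent_pair (h : LinearIndependent K ![x, y]) : x ≠ y := by
  simpa using h.injective.ne (show (0 : Fin 2) ≠ 1 by decide)

lemma add_ne_zero_of_linearIndependent_pair (h : LinearIndependent K ![x, y]) : x + y ≠ 0 :=
  fun h0 => one_ne_zero (LinearIndependent.pair_iff.1 h 1 1 (by rw [one_smul, one_smul, h0])).1

lemma LinearIndependent.pair_smul_add_smul_left {a : K} (h : LinearIndependent K ![x, y])
    (ha : a ≠ 0) (b : K) : LinearIndependent K ![a • x + b • y, y] := by
  rw [LinearIndependent.pair_iff] at h ⊢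
  intro s t hst
  obtain ⟨h₁, h₂⟩ := h (s * a) (s * b + t) (by
    rw [← hst, smul_add, add_smul, mul_smul, mul_smul]; abel)
  obtain rfl : s = 0 := (mul_eq_zero.1 h₁).resolve_right ha
  simpa using h₂

lemma LinearIndependent.pair_of_ne {ι : Type*} {b : ι → V} (hb : LinearIndependent K b)
    {k l : ι} (hkl : k ≠ l) : LinearIndependent K ![b k, b l] := by
  rw [LinearIndependent.pair_iff]
  intro s t hst
  classical
  have := (linearIndependent_iff'.1 hb) {k, l} (Pi.single k s + Pi.single l t)
  simp_all [Finset.sum_pair hkl, Pi.single_apply, hkl.symm]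

end Pair

section Rank

variable {m n s : ℕ}

lemma rowRank_eq_zero_iff {M : Matrix (Fin m) (Fin n) D} : rowRank M = 0 ↔ M = 0 := by
  rw [rowRank, Submodule.finrank_eq_zero, Submodule.span_eq_bot, Set.forall_mem_range]
  exact ⟨funext, fun h i => by rw [h]; rfl⟩

@[simp] lemma rowRank_zero : rowRank (0 : Matrix (Fin m) (Fin n) D) = 0 :=
  rowRank_eq_zero_iff.2 rfl

@[simp] lemma vecMulVec_zero_right (u : Fin m → D) : u ⊗ᵥ (0 : Fin n → D) = 0 := by
  ext
  simp [vecMulVec_apply]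

lemma sum_vecMulVec_row (a : Fin s → Fin m → D) (b : Fin s → Fin n → D) (i : Fin m) :
    (∑ k, a k ⊗ᵥ b k) i = ∑ k, a k i • b k := by
  ext j
  simp [Matrix.sum_apply, vecMulVec_apply, Finset.sum_apply]

lemma dotProduct_sum_op_smul (c : Fin m → D) (a : Fin s → Fin m → D) (g : Fin s → Dᵐᵒᵖ) :
    c ⬝ᵥ ∑ k, g k • a k = ∑ k, (c ⬝ᵥ a k) * unop (g k) := by
  simp only [dotProduct, Finset.sum_apply, Pi.smul_apply, smul_eq_mul_unop, Finset.mul_sum,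
    Finset.sum_mul, mul_assoc]
  exact Finset.sum_comm

lemma linearIndependent_op_iff_exists_dotProduct {a : Fin s → Fin m → D} :
    LinearIndependent Dᵐᵒᵖ a ↔
      ∃ c : Fin s → Fin m → D, ∀ l k, c l ⬝ᵥ a k = if k = l then 1 else 0 := by
  constructor
  · intro ha
    classical
    have hg : ∀ l, ∃ g : (Fin m → D) →ₗ[Dᵐᵒᵖ] Dᵐᵒᵖ, ∀ k, g (a k) = if k = l then 1 else 0 := by
      intro l
      obtain ⟨g, hg⟩ := LinearMap.exists_extend ((Finsupp.lapply l).comp ha.repr)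
      refine ⟨g, fun k => ?_⟩
      have := congrArg (· ⟨a k, Submodule.subset_span ⟨k, rfl⟩⟩) hg
      simp only [LinearMap.coe_comp, Function.comp_apply, Submodule.subtype_apply] at this
      rw [this, ha.repr_eq_single k _ rfl]
      simp [Finsupp.single_apply]
    choose g hg using hg
    refine ⟨fun l i => unop (g l (Pi.single i 1)), fun l k => ?_⟩
    have hak : a k = ∑ i, op (a k i) • (Pi.single i 1 : Fin m → D) := by
      ext j
      simp [Finset.sum_apply, Pi.single_apply]
    have := congrArg unop (hg l k)
    rw [hak, map_sum] at this
    simpa [dotProduct, apply_ite unop] using this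
  · rintro ⟨c, hc⟩
    rw [Fintype.linearIndependent_iff]
    intro g hg l
    have := congrArg (c l ⬝ᵥ ·) hg
    simpa [dotProduct_sum_op_smul, hc] using this

lemma span_rows_sum_vecMulVec {a : Fin s → Fin m → D} (ha : LinearIndependent Dᵐᵒᵖ a)
    (b : Fin s → Fin n → D) :
    Submodule.span D (Set.range fun i => (∑ k, a k ⊗ᵥ b k) i) = Submodule.span D (Set.range b) := by
  apply le_antisymm
  · rw [Submodule.span_le]
    rintro _ ⟨i, rfl⟩
    simp only [sum_vecMulVec_row]
    exact Submodule.sum_mem _ fun k _ => Submodule.smul_mem _ _ (Submodule.subset_span ⟨k, rfl⟩)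
  · rw [Submodule.span_le]
    rintro _ ⟨l, rfl⟩
    obtain ⟨c, hc⟩ := linearIndependent_op_iff_exists_dotProduct.1 ha
    rw [SetLike.mem_coe, Submodule.mem_span_range_iff_exists_fun]
    refine ⟨c l, ?_⟩
    simp only [sum_vecMulVec_row, Finset.smul_sum, smul_smul]
    rw [Finset.sum_comm]
    simp_rw [← Finset.sum_smul]
    simp [← dotProduct.eq_1, hc]

lemma rowRank_sum_vecMulVec {a : Fin s → Fin m → D} (ha : LinearIndependent Dᵐᵒᵖ a)
    (b : Fin s → Fin n → D) :
    rowRank (∑ k, a k ⊗ᵥ b k) = Module.finrank D (Submodule.span D (Set.range b)) := by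
  rw [rowRank, span_rows_sum_vecMulVec ha]

lemma rowRank_vecMulVec {u : Fin m → D} {v : Fin n → D} (hu : u ≠ 0) (hv : v ≠ 0) :
    rowRank (u ⊗ᵥ v) = 1 := by
  have hu' : LinearIndependent Dᵐᵒᵖ ![u] := linearIndependent_unique_iff.2 hu
  have := rowRank_sum_vecMulVec hu' ![v]
  rwa [Fin.sum_univ_one, finrank_span_eq_card (linearIndependent_unique_iff.2 hv),
    Fintype.card_fin] at this

lemma rowRank_vecMulVec_le_one (u : Fin m → D) (v : Fin n → D) : rowRank (u ⊗ᵥ v) ≤ 1 := by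
  rcases eq_or_ne u 0 with rfl | hu
  · simp
  rcases eq_or_ne v 0 with rfl | hv
  · simp
  exact (rowRank_vecMulVec hu hv).le

lemma rowRank_vecMulVec_add_vecMulVec {u w : Fin m → D} {x y : Fin n → D}
    (huw : LinearIndependent Dᵐᵒᵖ ![u, w]) (hxy : LinearIndependent D ![x, y]) :
    rowRank (u ⊗ᵥ x + w ⊗ᵥ y) = 2 := by
  have := rowRank_sum_vecMulVec huw ![x, y]
  rwa [Fin.sum_univ_two, finrank_span_eq_card hxy, Fintype.card_fin] at this

lemma rowRank_vecMulVec_sub_vecMulVec {u w : Fin m → D} {x y : Fin n → D}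
    (huw : LinearIndependent Dᵐᵒᵖ ![u, w]) (hxy : LinearIndependent D ![x, y]) :
    rowRank (u ⊗ᵥ x - w ⊗ᵥ y) = 2 := by
  rw [sub_eq_add_neg, ← vecMulVec_neg]
  exact rowRank_vecMulVec_add_vecMulVec huw (LinearIndependent.pair_neg_right_iff.2 hxy)

lemma exists_smul_eq_of_rowRank_vecMulVec_add_le_one {u w : Fin m → D} {x y : Fin n → D}
    (huw : LinearIndependent Dᵐᵒᵖ ![u, w]) (hx : x ≠ 0) (h : rowRank (u ⊗ᵥ x + w ⊗ᵥ y) ≤ 1) :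
    ∃ c : D, c • x = y := by
  refine exists_smul_eq_of_not_linearIndependent_pair hx fun hxy => ?_
  have := rowRank_vecMulVec_add_vecMulVec huw hxy
  omega

lemma exists_sum_vecMulVec {r : ℕ} (M : Matrix (Fin m) (Fin n) D) (hr : rowRank M = r) :
    ∃ (a : Fin r → Fin m → D) (b : Fin r → Fin n → D),
      M = ∑ k, a k ⊗ᵥ b k ∧ LinearIndependent Dᵐᵒᵖ a ∧ LinearIndependent D b := by
  classical
  subst hr
  set V := Submodule.span D (Set.range fun i => M i)
  have hrow : ∀ i, M i ∈ V := fun i => Submodule.subset_span ⟨i, rfl⟩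
  let B : Module.Basis (Fin (rowRank M)) D V := Module.finBasis D V
  set a : Fin (rowRank M) → Fin m → D := fun k i => B.repr ⟨M i, hrow i⟩ k
  set b : Fin (rowRank M) → Fin n → D := fun k => B k
  have hb : LinearIndependent D b := B.linearIndependent.map' V.subtype V.ker_subtype
  have hM : M = ∑ k, a k ⊗ᵥ b k := by
    funext i
    rw [sum_vecMulVec_row]
    have h := congrArg Subtype.val (B.sum_repr ⟨M i, hrow i⟩)
    simpa only [Submodule.coe_sum, Submodule.coe_smul] using h.symm
  refine ⟨a, b, hM, linearIndependent_op_iff_exists_dotProduct.2 ?_, hb⟩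
  -- `b l = ∑ i, c l i • M i`; comparing coordinates in the basis `b` gives `c l ⬝ᵥ a k = δ`.
  have hbl : ∀ l, ∃ c : Fin m → D, ∑ i, c i • M i = b l := fun l =>
    (Submodule.mem_span_range_iff_exists_fun D).1 (B l).2
  choose c hc using hbl
  refine ⟨c, fun l k => ?_⟩
  have hcoord : ∑ k, (c l ⬝ᵥ a k - if k = l then 1 else 0) • b k = 0 := by
    simp only [sub_smul, Finset.sum_sub_distrib, ite_smul, one_smul, zero_smul,
      Finset.sum_ite_eq', Finset.mem_univ, if_true]
    rw [← hc l, sub_eq_zero]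
    conv_rhs => rw [hM]
    simp only [sum_vecMulVec_row, Finset.smul_sum, smul_smul, dotProduct, Finset.sum_smul]
    exact Finset.sum_comm
  exact sub_eq_zero.1 (Fintype.linearIndependent_iff.1 hb _ hcoord k)

lemma rowRank_sum_vecMulVec_sub_lt {r : ℕ} (a : Fin r → Fin m → D) (b : Fin r → Fin n → D)
    {k l : Fin r} (hlk : l ≠ k) (t : D) :
    rowRank (∑ j, a j ⊗ᵥ b j - a k ⊗ᵥ (b k + t • b l)) < r := by
  set S := Submodule.span D (Set.range fun j : {j // j ≠ k} => b j)
  have hrows : Submodule.span D (Set.range fun i => (∑ j, a j ⊗ᵥ b j - a k ⊗ᵥ (b k + t • b l)) i)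
      ≤ S := by
    rw [Submodule.span_le]
    rintro _ ⟨i, rfl⟩
    have hrow : (∑ j, a j ⊗ᵥ b j - a k ⊗ᵥ (b k + t • b l)) i =
        ∑ j : {j // j ≠ k}, a j i • b j - (a k i * t) • b l := by
      ext c
      simp only [Matrix.sub_apply, Matrix.sum_apply, vecMulVec_apply, Pi.sub_apply,
        Finset.sum_apply, Pi.smul_apply, smul_eq_mul, Pi.add_apply]
      rw [Fintype.sum_eq_add_sum_subtype_ne _ k]
      noncomm_ring
    beta_reduce
    rw [hrow]
    exact S.sub_mem (S.sum_mem fun j _ => S.smul_mem _ (Submodule.subset_span ⟨j, rfl⟩))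
      (S.smul_mem _ (Submodule.subset_span ⟨⟨l, hlk⟩, rfl⟩))
  have hS : Module.finrank D S ≤ r - 1 := by
    simpa [Set.finrank] using finrank_range_le_card (R := D) fun j : {j // j ≠ k} => b j
  have := Submodule.finrank_mono hrows
  have := k.pos
  rw [rowRank]
  omega

lemma exists_vecMulVec_of_rowRank_le_one {M : Matrix (Fin m) (Fin n) D} (h : rowRank M ≤ 1) :
    ∃ u v, M = u ⊗ᵥ v := by
  rcases Nat.le_one_iff_eq_zero_or_eq_one.1 h with h0 | h1
  · exact ⟨0, 0, by rw [rowRank_eq_zero_iff.1 h0, zero_vecMulVec]⟩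
  · obtain ⟨a, b, rfl, -, -⟩ := exists_sum_vecMulVec M h1
    exact ⟨a 0, b 0, Fin.sum_univ_one _⟩

lemma exists_vecMulVec_of_rowRank_eq_one {M : Matrix (Fin m) (Fin n) D} (h : rowRank M = 1) :
    ∃ u v, u ≠ 0 ∧ v ≠ 0 ∧ M = u ⊗ᵥ v := by
  obtain ⟨u, v, rfl⟩ := exists_vecMulVec_of_rowRank_le_one h.le
  refine ⟨u, v, ?_, ?_, rfl⟩ <;> rintro rfl <;> simp at h

lemma exists_vecMulVec_add_vecMulVec {M : Matrix (Fin m) (Fin n) D} (h : rowRank M = 2) :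
    ∃ u w x y, M = u ⊗ᵥ x + w ⊗ᵥ y ∧
      LinearIndependent Dᵐᵒᵖ ![u, w] ∧ LinearIndependent D ![x, y] := by
  obtain ⟨a, b, rfl, ha, hb⟩ := exists_sum_vecMulVec M h
  exact ⟨a 0, a 1, b 0, b 1, Fin.sum_univ_two _, ha.pair_of_ne (by decide),
    hb.pair_of_ne (by decide)⟩

end Rank

section TwoTerm

variable {m n : ℕ} {u w : Fin m → D} {x y : Fin n → D}

lemma not_linearIndependent_or_of_rowRank_add_le_one (h : rowRank (u ⊗ᵥ x + w ⊗ᵥ y) ≤ 1) :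
    ¬ LinearIndependent Dᵐᵒᵖ ![u, w] ∨ ¬ LinearIndependent D ![x, y] := by
  by_contra! hli
  have := rowRank_vecMulVec_add_vecMulVec hli.1 hli.2
  omega

lemma not_linearIndependent_or_of_rowRank_sub_le_one (h : rowRank (u ⊗ᵥ x - w ⊗ᵥ y) ≤ 1) :
    ¬ LinearIndependent Dᵐᵒᵖ ![u, w] ∨ ¬ LinearIndependent D ![x, y] := by
  by_contra! hli
  have := rowRank_vecMulVec_sub_vecMulVec hli.1 hli.2
  omega

lemma exists_mul_eq_of_rowRank_le_one (huw : LinearIndependent Dᵐᵒᵖ ![u, w])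
    (hxy : LinearIndependent D ![x, y]) {a b c d : D} (hb : b ≠ 0)
    (h : rowRank (u ⊗ᵥ (a • x + b • y) + w ⊗ᵥ (c • x + d • y)) ≤ 1) :
    ∃ θ : D, c = θ * a ∧ d = θ * b := by
  have hP : a • x + b • y ≠ 0 := fun h0 => hb (LinearIndependent.pair_iff.1 hxy a b h0).2
  obtain ⟨θ, hθ⟩ := exists_smul_eq_of_rowRank_vecMulVec_add_le_one huw hP h
  obtain ⟨h₁, h₂⟩ := LinearIndependent.pair_iff.1 hxy (θ * a - c) (θ * b - d)
    (by rw [sub_smul, sub_smul, mul_smul, mul_smul, sub_add_sub_comm, ← smul_add, hθ, sub_self])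
  exact ⟨θ, (sub_eq_zero.1 h₁).symm, (sub_eq_zero.1 h₂).symm⟩

lemma eq_zero_of_vecMulVec_eq (huw : LinearIndependent Dᵐᵒᵖ ![u, w]) (h : u ⊗ᵥ x = w ⊗ᵥ y) :
    x = 0 ∧ y = 0 := by
  have hj : ∀ j, x j = 0 ∧ -y j = 0 := fun j => by
    refine (LinearIndependent.pair_iff.1 huw (op (x j)) (op (-y j)) ?_).imp ?_ ?_
    · ext i
      simpa [sub_eq_add_neg, vecMulVec_apply] using sub_eq_zero.2 (congrFun (congrFun h i) j)
    all_goals simp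
  exact ⟨funext fun j => (hj j).1, funext fun j => neg_eq_zero.1 (hj j).2⟩

lemma exists_vecMulVec_smul_eq {α : Fin m → D} {β : Fin n → D} (hu : u ≠ 0) (hx : x ≠ 0)
    (hα : ¬ LinearIndependent Dᵐᵒᵖ ![α, u]) (hβ : ¬ LinearIndependent D ![β, x])
    (hα0 : α ≠ 0) (hβ0 : β ≠ 0) : ∃ d : D, d ≠ 0 ∧ α ⊗ᵥ β = u ⊗ᵥ d • x := by
  rw [LinearIndependent.pair_symm_iff] at hα hβ
  obtain ⟨s, rfl⟩ := exists_smul_eq_of_not_linearIndependent_pair hu hα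
  obtain ⟨s, rfl⟩ := MulOpposite.op_surjective s
  obtain ⟨t, rfl⟩ := exists_smul_eq_of_not_linearIndependent_pair hx hβ
  refine ⟨s * t, mul_ne_zero (fun hs => hα0 (by simp [hs])) (fun ht => hβ0 (by simp [ht])), ?_⟩
  rw [← vecMulVec_smul', smul_smul]

lemma rowRank_vecMulVec_sub_vecMulVec_right (hu : u ≠ 0) (hxy : x ≠ y) :
    rowRank (u ⊗ᵥ x - u ⊗ᵥ y) = 1 := by
  rw [← vecMulVec_sub]
  exact rowRank_vecMulVec hu (sub_ne_zero.2 hxy)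

lemma rowRank_vecMulVec_sub_vecMulVec_left (huw : u ≠ w) (hx : x ≠ 0) :
    rowRank (u ⊗ᵥ x - w ⊗ᵥ x) = 1 := by
  rw [← sub_vecMulVec]
  exact rowRank_vecMulVec (sub_ne_zero.2 huw) hx

end TwoTerm

section Pad

variable {m n p q : ℕ}

def padVec {α : Type*} [Zero α] (p : ℕ) (v : Fin m → α) : Fin p → α :=
  fun i => if h : (i : ℕ) < m then v ⟨i, h⟩ else 0

lemma pad_vecMulVec (u : Fin m → D) (v : Fin n → D) :
    pad p q (u ⊗ᵥ v) = padVec p u ⊗ᵥ padVec q v := by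
  ext i j
  simp only [pad, of_apply, vecMulVec_apply, padVec]
  split_ifs <;> simp

lemma pad_add (A B : Matrix (Fin m) (Fin n) D) : pad p q (A + B) = pad p q A + pad p q B := by
  ext i j
  simp only [pad, of_apply, Matrix.add_apply]
  by_cases hi : (i : ℕ) < m <;> by_cases hj : (j : ℕ) < n <;> simp [hi, hj]

lemma pad_sub (A B : Matrix (Fin m) (Fin n) D) : pad p q (A - B) = pad p q A - pad p q B := by
  ext i j
  simp only [pad, of_apply, Matrix.sub_apply]
  by_cases hi : (i : ℕ) < m <;> by_cases hj : (j : ℕ) < n <;> simp [hi, hj]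

lemma padVec_add (u w : Fin m → D) : padVec p (u + w) = padVec p u + padVec p w := by
  ext i
  simp only [padVec, Pi.add_apply]
  split_ifs <;> simp

lemma padVec_sub (u w : Fin m → D) : padVec p (u - w) = padVec p u - padVec p w := by
  ext i
  simp only [padVec, Pi.sub_apply]
  split_ifs <;> simp

lemma padVec_smul {K : Type*} [SMulZeroClass K D] (c : K) (u : Fin m → D) :
    padVec p (c • u) = c • padVec p u := by
  ext i
  simp only [padVec, Pi.smul_apply]
  split_ifs <;> simp

@[simp] lemma padVec_zero : padVec p (0 : Fin m → D) = 0 := by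
  ext i
  simp [padVec]

lemma padVec_injective (h : m ≤ p) : Function.Injective (padVec p : (Fin m → D) → Fin p → D) := by
  intro u w huw
  ext i
  simpa [padVec] using congrFun huw ⟨i, i.2.trans_le h⟩

lemma padVec_ne_zero (h : m ≤ p) {u : Fin m → D} (hu : u ≠ 0) : padVec p u ≠ 0 := by
  exact fun h0 => hu (padVec_injective h (by rw [h0, padVec_zero]))

lemma linearIndependent_padVec_pair_iff {K : Type*} [Ring K] [Module K D] (h : m ≤ p)
    {u w : Fin m → D} :
    LinearIndependent K ![padVec p u, padVec p w] ↔ LinearIndependent K ![u, w] := by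
  have hinj : ∀ z : Fin m → D, padVec p z = 0 ↔ z = 0 := fun z => by
    rw [← (padVec_injective h).eq_iff, padVec_zero]
  simp only [LinearIndependent.pair_iff, ← padVec_smul, ← padVec_add, hinj]

def e₁ (n : ℕ) : Fin n → D := fun j => if (j : ℕ) = 0 then 1 else 0

lemma e₁_ne_zero (hn : 1 ≤ n) : (e₁ n : Fin n → D) ≠ 0 := fun h => by
  simpa [e₁] using congrFun h ⟨0, hn⟩

lemma padVec_e₁ (hm : 1 ≤ m) : padVec p (e₁ m : Fin m → D) = e₁ p := by
  ext i
  simp only [padVec, e₁]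
  split_ifs <;> first | rfl | omega

lemma linearIndependent_padVec_e₁_iff {K : Type*} [Ring K] [Module K D] (hm : 1 ≤ m) (h : m ≤ p)
    {u : Fin m → D} : LinearIndependent K ![padVec p u, e₁ p] ↔ LinearIndependent K ![u, e₁ m] := by
  rw [← padVec_e₁ hm, linearIndependent_padVec_pair_iff h]

end Pad

section Defect

variable {m n p q : ℕ} {u w : Fin m → D} {x y : Fin n → D}

/-- Test the hypothesis with `X = u ⊗ᵥ x`, `u ⊗ᵥ (x + y)` and `(u + w) ⊗ᵥ x`. -/
lemma exists_eq_or_of_forall_rowRank_add_pad (hmp : m ≤ p) (hnq : n ≤ q)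
    (huw : LinearIndependent Dᵐᵒᵖ ![u, w]) (hxy : LinearIndependent D ![x, y])
    {W : Matrix (Fin p) (Fin q) D}
    (hW : ∀ X, rowRank X = 1 → rowRank (u ⊗ᵥ x + w ⊗ᵥ y - X) ≤ 1 → rowRank (W + pad p q X) = 1) :
    (∃ γ : D, W = padVec p u ⊗ᵥ γ • padVec q x) ∨
      ∃ γ : D, W = padVec p w ⊗ᵥ γ • padVec q y - padVec p u ⊗ᵥ padVec q x := by
  have hu0 : u ≠ 0 := by simpa using huw.ne_zero 0
  have hx0 : x ≠ 0 := by simpa using hxy.ne_zero 0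
  have huw' := (linearIndependent_padVec_pair_iff hmp).2 huw
  have hxy' := (linearIndependent_padVec_pair_iff hnq).2 hxy
  have hu0' : padVec p u ≠ 0 := padVec_ne_zero hmp hu0
  have hw0' : padVec p w ≠ 0 := by simpa using huw'.ne_zero 1
  have hx0' : padVec q x ≠ 0 := padVec_ne_zero hnq hx0
  have hy0' : padVec q y ≠ 0 := by simpa using hxy'.ne_zero 1
  obtain ⟨α, β, hα, hβ, hαβ⟩ := exists_vecMulVec_of_rowRank_eq_one
    (hW (u ⊗ᵥ x) (rowRank_vecMulVec hu0 hx0)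
      (by rw [add_sub_cancel_left]; exact rowRank_vecMulVec_le_one _ _))
  rw [pad_vecMulVec] at hαβ
  have h₁ := hW (u ⊗ᵥ (x + y))
    (rowRank_vecMulVec hu0 (add_ne_zero_of_linearIndependent_pair hxy)) (by
    rw [show u ⊗ᵥ x + w ⊗ᵥ y - u ⊗ᵥ (x + y) = (w - u) ⊗ᵥ y by
      rw [vecMulVec_add, sub_vecMulVec]; abel]
    exact rowRank_vecMulVec_le_one _ _)
  have h₂ := hW ((u + w) ⊗ᵥ x)
    (rowRank_vecMulVec (add_ne_zero_of_linearIndependent_pair huw) hx0) (by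
    rw [show u ⊗ᵥ x + w ⊗ᵥ y - (u + w) ⊗ᵥ x = w ⊗ᵥ (y - x) by
      rw [add_vecMulVec, vecMulVec_sub]; abel]
    exact rowRank_vecMulVec_le_one _ _)
  rw [pad_vecMulVec, padVec_add, vecMulVec_add, ← add_assoc, hαβ] at h₁
  rw [pad_vecMulVec, padVec_add, add_vecMulVec, ← add_assoc, hαβ] at h₂
  have hW' : W = α ⊗ᵥ β - padVec p u ⊗ᵥ padVec q x := eq_sub_of_add_eq hαβ
  rcases not_linearIndependent_or_of_rowRank_add_le_one h₁.le with hαu | hβy <;>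
    rcases not_linearIndependent_or_of_rowRank_add_le_one h₂.le with hαw | hβx
  · rw [LinearIndependent.pair_symm_iff] at hαu
    exact absurd huw' (not_linearIndependent_pair_trans hα hαu hαw)
  · obtain ⟨d, -, hd⟩ := exists_vecMulVec_smul_eq hu0' hx0' hαu hβx hα hβ
    exact Or.inl ⟨d - 1, by rw [hW', hd, sub_smul, one_smul, vecMulVec_sub]⟩
  · obtain ⟨d, -, hd⟩ := exists_vecMulVec_smul_eq hw0' hy0' hαw hβy hα hβ
    exact Or.inr ⟨d, by rw [hW', hd]⟩
  · rw [LinearIndependent.pair_symm_iff] at hβx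
    exact absurd hxy' (not_linearIndependent_pair_trans hβ hβx hβy)

lemma exists_eq_vecMulVec_of_forall_rowRank_add_pad (hmp : m ≤ p) (hnq : n ≤ q) {r : ℕ}
    {a : Fin r → Fin m → D} {b : Fin r → Fin n → D} (ha : LinearIndependent Dᵐᵒᵖ a)
    (hb : LinearIndependent D b) {W : Matrix (Fin p) (Fin q) D}
    (hW : ∀ X, rowRank X = 1 → rowRank (∑ j, a j ⊗ᵥ b j - X) < r → rowRank (W + pad p q X) = 1)
    {k l₁ l₂ : Fin r} (h₁ : l₁ ≠ k) (h₂ : l₂ ≠ k) (h₁₂ : l₁ ≠ l₂) :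
    ∃ z, W = padVec p (a k) ⊗ᵥ z := by
  have hak : a k ≠ 0 := ha.ne_zero k
  obtain ⟨α, β, hα, hβ, hαβ⟩ := exists_vecMulVec_of_rowRank_eq_one
    (hW (a k ⊗ᵥ b k) (rowRank_vecMulVec hak (hb.ne_zero k))
      (by simpa using rowRank_sum_vecMulVec_sub_lt a b h₁ 0))
  rw [pad_vecMulVec] at hαβ
  have hpar : ∀ l, l ≠ k →
      ¬ LinearIndependent Dᵐᵒᵖ ![α, padVec p (a k)] ∨
        ¬ LinearIndependent D ![β, padVec q (b l)] := fun l hl => by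
    have h := hW (a k ⊗ᵥ (b k + b l))
      (rowRank_vecMulVec hak (add_ne_zero_of_linearIndependent_pair (hb.pair_of_ne hl.symm)))
      (by simpa using rowRank_sum_vecMulVec_sub_lt a b hl 1)
    rw [pad_vecMulVec, padVec_add, vecMulVec_add, ← add_assoc, hαβ] at h
    exact not_linearIndependent_or_of_rowRank_add_le_one h.le
  have hαa : ¬ LinearIndependent Dᵐᵒᵖ ![α, padVec p (a k)] := by
    rcases hpar l₁ h₁ with h | hβ₁
    · exact h
    rcases hpar l₂ h₂ with h | hβ₂
    · exact h
    rw [LinearIndependent.pair_symm_iff] at hβ₁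
    exact absurd ((linearIndependent_padVec_pair_iff hnq).2 (hb.pair_of_ne h₁₂))
      (not_linearIndependent_pair_trans hβ hβ₁ hβ₂)
  rw [LinearIndependent.pair_symm_iff] at hαa
  obtain ⟨s, rfl⟩ := exists_smul_eq_of_not_linearIndependent_pair (padVec_ne_zero hmp hak) hαa
  obtain ⟨s, rfl⟩ := MulOpposite.op_surjective s
  refine ⟨s • β - padVec q (b k), ?_⟩
  rw [vecMulVec_sub, vecMulVec_smul', ← hαβ]
  abel

lemma eq_zero_or_eq_neg_pad_of_forall_rowRank_add_pad (hmp : m ≤ p) (hnq : n ≤ q)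
    (huw : LinearIndependent Dᵐᵒᵖ ![u, w]) (hxy : LinearIndependent D ![x, y])
    {W : Matrix (Fin p) (Fin q) D}
    (hW : ∀ X, rowRank X = 1 → rowRank (u ⊗ᵥ x + w ⊗ᵥ y - X) ≤ 1 → rowRank (W + pad p q X) = 1) :
    W = 0 ∨ W = -pad p q (u ⊗ᵥ x + w ⊗ᵥ y) := by
  have huw' := (linearIndependent_padVec_pair_iff hmp).2 huw
  have hxy' := (linearIndependent_padVec_pair_iff hnq).2 hxy
  have hx0 : padVec q x ≠ 0 := by simpa using hxy'.ne_zero 0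
  have hy0 : padVec q y ≠ 0 := by simpa using hxy'.ne_zero 1
  rcases exists_eq_or_of_forall_rowRank_add_pad hmp hnq huw hxy hW with ⟨γ, hγ⟩ | ⟨γ, hγ⟩ <;>
  rcases exists_eq_or_of_forall_rowRank_add_pad hmp hnq (LinearIndependent.pair_symm_iff.1 huw)
    (LinearIndependent.pair_symm_iff.1 hxy) (by rwa [add_comm]) with ⟨δ, hδ⟩ | ⟨δ, hδ⟩
  · left
    rw [hγ, (eq_zero_of_vecMulVec_eq huw' (hγ.symm.trans hδ)).1, vecMulVec_zero_right]
  · have hE : padVec p w ⊗ᵥ padVec q y = padVec p u ⊗ᵥ (δ - γ) • padVec q x := by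
      rw [sub_smul, vecMulVec_sub, ← hγ, hδ]
      abel
    exact absurd (eq_zero_of_vecMulVec_eq (LinearIndependent.pair_symm_iff.1 huw') hE).1 hy0
  · have hE : padVec p u ⊗ᵥ padVec q x = padVec p w ⊗ᵥ (γ - δ) • padVec q y := by
      rw [sub_smul, vecMulVec_sub, ← hδ, hγ]
      abel
    exact absurd (eq_zero_of_vecMulVec_eq huw' hE).1 hx0
  · right
    have hE : padVec p w ⊗ᵥ (γ + 1) • padVec q y = padVec p u ⊗ᵥ (δ + 1) • padVec q x := by
      rw [add_smul, one_smul, vecMulVec_add, add_smul, one_smul, vecMulVec_add,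
        show padVec p w ⊗ᵥ γ • padVec q y = W + padVec p u ⊗ᵥ padVec q x by rw [hγ]; abel,
        show padVec p u ⊗ᵥ δ • padVec q x = W + padVec p w ⊗ᵥ padVec q y by rw [hδ]; abel]
      abel
    have hγ1 : γ + 1 = 0 :=
      (smul_eq_zero.1 (eq_zero_of_vecMulVec_eq (LinearIndependent.pair_symm_iff.1 huw') hE).1
        ).resolve_right hy0
    rw [hγ, eq_neg_of_add_eq_zero_left hγ1, neg_one_smul, vecMulVec_neg, pad_add, pad_vecMulVec,
      pad_vecMulVec]
    abel

end Defect

lemma mem_Rvec_iff {m n : ℕ} {M : Matrix (Fin m) (Fin n) D} {y : Fin n → D} :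
    M ∈ Rvec y ↔ ∃ u, M = u ⊗ᵥ y :=
  ⟨fun ⟨u, hu⟩ => ⟨u, Matrix.ext hu⟩, fun ⟨u, hu⟩ => ⟨u, fun i j => by rw [hu]; rfl⟩⟩

lemma mem_Lvec_iff {m n : ℕ} {M : Matrix (Fin m) (Fin n) D} {x : Fin m → D} :
    M ∈ Lvec x ↔ ∃ v, M = x ⊗ᵥ v :=
  ⟨fun ⟨v, hv⟩ => ⟨v, Matrix.ext hv⟩, fun ⟨v, hv⟩ => ⟨v, fun i j => by rw [hv]; rfl⟩⟩

lemma vecMulVec_mem_cross_or {m n : ℕ} (hm : 1 ≤ m) (hn : 1 ≤ n) (u : Fin m → D)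
    (v : Fin n → D) :
    u ⊗ᵥ v ∈ Rvec (e₁ n) ∪ Lvec (e₁ m) ∨
      LinearIndependent Dᵐᵒᵖ ![u, e₁ m] ∧ LinearIndependent D ![v, e₁ n] := by
  by_cases hv : LinearIndependent D ![v, e₁ n]
  · by_cases hu : LinearIndependent Dᵐᵒᵖ ![u, e₁ m]
    · exact Or.inr ⟨hu, hv⟩
    rw [LinearIndependent.pair_symm_iff] at hu
    obtain ⟨c, rfl⟩ := exists_smul_eq_of_not_linearIndependent_pair (e₁_ne_zero hm) hu
    obtain ⟨c, rfl⟩ := MulOpposite.op_surjective c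
    exact Or.inl (Or.inr (mem_Lvec_iff.2 ⟨c • v, (vecMulVec_smul' _ _ _).symm⟩))
  rw [LinearIndependent.pair_symm_iff] at hv
  obtain ⟨c, rfl⟩ := exists_smul_eq_of_not_linearIndependent_pair (e₁_ne_zero hn) hv
  exact Or.inl (Or.inl (mem_Rvec_iff.2 ⟨op c • u, vecMulVec_smul' _ _ _⟩))

section Normalized

variable {m n p q : ℕ}

structure CrossNormalized (φ : Matrix (Fin m) (Fin n) D → Matrix (Fin p) (Fin q) D) : Prop where
  one_le_m : 1 ≤ m
  one_le_n : 1 ≤ n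
  m_le_p : m ≤ p
  n_le_q : n ≤ q
  adj : ∀ A B, Adjacent A B → Adjacent (φ A) (φ B)
  eq_pad : ∀ M ∈ Rvec (e₁ n) ∪ Lvec (e₁ m), φ M = pad p q M

namespace CrossNormalized

variable {φ : Matrix (Fin m) (Fin n) D → Matrix (Fin p) (Fin q) D}

lemma rowRank_map_sub (hφ : CrossNormalized φ) {A B : Matrix (Fin m) (Fin n) D}
    (h : rowRank (A - B) = 1) : rowRank (φ A - φ B) = 1 :=
  hφ.adj A B h

lemma linearIndependent_padVec_e₁_op (hφ : CrossNormalized φ) {u : Fin m → D}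
    (hu : LinearIndependent Dᵐᵒᵖ ![u, e₁ m]) : LinearIndependent Dᵐᵒᵖ ![padVec p u, e₁ p] :=
  (linearIndependent_padVec_e₁_iff hφ.one_le_m hφ.m_le_p).2 hu

lemma linearIndependent_padVec_e₁ (hφ : CrossNormalized φ) {v : Fin n → D}
    (hv : LinearIndependent D ![v, e₁ n]) : LinearIndependent D ![padVec q v, e₁ q] :=
  (linearIndependent_padVec_e₁_iff hφ.one_le_n hφ.n_le_q).2 hv

lemma map_vecMulVec_e₁ (hφ : CrossNormalized φ) (u : Fin m → D) :
    φ (u ⊗ᵥ e₁ n) = padVec p u ⊗ᵥ e₁ q := by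
  rw [hφ.eq_pad _ (Or.inl (mem_Rvec_iff.2 ⟨u, rfl⟩)), pad_vecMulVec, padVec_e₁ hφ.one_le_n]

lemma map_e₁_vecMulVec (hφ : CrossNormalized φ) (v : Fin n → D) :
    φ (e₁ m ⊗ᵥ v) = e₁ p ⊗ᵥ padVec q v := by
  rw [hφ.eq_pad _ (Or.inr (mem_Lvec_iff.2 ⟨v, rfl⟩)), pad_vecMulVec, padVec_e₁ hφ.one_le_m]

lemma map_zero (hφ : CrossNormalized φ) : φ 0 = 0 := by
  simpa using hφ.map_vecMulVec_e₁ 0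

lemma map_generic_cases (hφ : CrossNormalized φ) {u : Fin m → D} {v : Fin n → D}
    (hu : LinearIndependent Dᵐᵒᵖ ![u, e₁ m]) (hv : LinearIndependent D ![v, e₁ n]) :
    (∃ d : D, d ≠ 0 ∧ φ (u ⊗ᵥ v) = padVec p u ⊗ᵥ d • padVec q v) ∨
      (∃ c : D, c ≠ 0 ∧ φ (u ⊗ᵥ v) = e₁ p ⊗ᵥ c • e₁ q) := by
  have hu' := hφ.linearIndependent_padVec_e₁_op hu
  have hv' := hφ.linearIndependent_padVec_e₁ hv
  have hu0 : u ≠ 0 := by simpa using hu.ne_zero 0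
  have hv0 : v ≠ 0 := by simpa using hv.ne_zero 0
  obtain ⟨α, β, hα, hβ, hφuv⟩ := exists_vecMulVec_of_rowRank_eq_one (by
    simpa [hφ.map_zero] using
      hφ.rowRank_map_sub (B := 0) (by simpa using rowRank_vecMulVec hu0 hv0))
  have h₁ := hφ.rowRank_map_sub
    (rowRank_vecMulVec_sub_vecMulVec_right hu0 (ne_of_linearIndependent_pair hv))
  have h₂ := hφ.rowRank_map_sub
    (rowRank_vecMulVec_sub_vecMulVec_left (ne_of_linearIndependent_pair hu) hv0)
  rw [hφuv, hφ.map_vecMulVec_e₁] at h₁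
  rw [hφuv, hφ.map_e₁_vecMulVec] at h₂
  rcases not_linearIndependent_or_of_rowRank_sub_le_one h₁.le with h₁ | h₁ <;>
    rcases not_linearIndependent_or_of_rowRank_sub_le_one h₂.le with h₂ | h₂
  · rw [LinearIndependent.pair_symm_iff] at h₁
    exact absurd hu' (not_linearIndependent_pair_trans hα h₁ h₂)
  · exact Or.inl (hφuv ▸ exists_vecMulVec_smul_eq (padVec_ne_zero hφ.m_le_p hu0)
      (padVec_ne_zero hφ.n_le_q hv0) h₁ h₂ hα hβ)
  · exact Or.inr (hφuv ▸ exists_vecMulVec_smul_eq (e₁_ne_zero (hφ.one_le_m.trans hφ.m_le_p))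
      (e₁_ne_zero (hφ.one_le_n.trans hφ.n_le_q)) h₂ h₁ hα hβ)
  · rw [LinearIndependent.pair_symm_iff] at h₂
    exact absurd hv' (not_linearIndependent_pair_trans hβ h₂ h₁)

lemma exists_map_eq_e₁_of_rowRank_sub (hφ : CrossNormalized φ) {u₁ u₂ : Fin m → D}
    {v₁ v₂ : Fin n → D} (hu₂ : LinearIndependent Dᵐᵒᵖ ![u₂, e₁ m])
    (hv₂ : LinearIndependent D ![v₂, e₁ n]) {c : D} (hc : c ≠ 0)
    (h₁ : φ (u₁ ⊗ᵥ v₁) = e₁ p ⊗ᵥ c • e₁ q) (h : rowRank (u₁ ⊗ᵥ v₁ - u₂ ⊗ᵥ v₂) = 1) :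
    ∃ c : D, c ≠ 0 ∧ φ (u₂ ⊗ᵥ v₂) = e₁ p ⊗ᵥ c • e₁ q := by
  refine (hφ.map_generic_cases hu₂ hv₂).resolve_left fun ⟨d, hd, h₂⟩ => ?_
  have h' := hφ.rowRank_map_sub h
  rw [h₁, h₂] at h'
  rcases not_linearIndependent_or_of_rowRank_sub_le_one h'.le with h' | h'
  · exact h' (LinearIndependent.pair_symm_iff.1 (hφ.linearIndependent_padVec_e₁_op hu₂))
  · rw [LinearIndependent.pair_smul_smul_iff hc.isUnit hd.isUnit] at h'
    exact h' (LinearIndependent.pair_symm_iff.1 (hφ.linearIndependent_padVec_e₁ hv₂))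

/-- The second alternative of `map_generic_cases` propagates along adjacency, and any two generic
matrices are joined by a path of length two through generic matrices. -/
lemma degZero_of_map_eq_e₁ (hφ : CrossNormalized φ) {u : Fin m → D} {v : Fin n → D}
    (hu : LinearIndependent Dᵐᵒᵖ ![u, e₁ m]) {c : D} (hc : c ≠ 0)
    (h : φ (u ⊗ᵥ v) = e₁ p ⊗ᵥ c • e₁ q) : DegZero φ := by
  have hu0 : u ≠ 0 := by simpa using hu.ne_zero 0
  have hall : ∀ u' v', LinearIndependent Dᵐᵒᵖ ![u', e₁ m] → LinearIndependent D ![v', e₁ n] →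
      ∃ c : D, c ≠ 0 ∧ φ (u' ⊗ᵥ v') = e₁ p ⊗ᵥ c • e₁ q := by
    intro u' v' hu' hv'
    have hv'0 : v' ≠ 0 := by simpa using hv'.ne_zero 0
    obtain ⟨c₁, hc₁, h₁⟩ : ∃ c : D, c ≠ 0 ∧ φ (u ⊗ᵥ v') = e₁ p ⊗ᵥ c • e₁ q := by
      rcases eq_or_ne v v' with rfl | hvv
      · exact ⟨c, hc, h⟩
      exact hφ.exists_map_eq_e₁_of_rowRank_sub hu hv' hc h
        (rowRank_vecMulVec_sub_vecMulVec_right hu0 hvv)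
    rcases eq_or_ne u u' with rfl | huu
    · exact ⟨c₁, hc₁, h₁⟩
    exact hφ.exists_map_eq_e₁_of_rowRank_sub hu' hv' hc₁ h₁
      (rowRank_vecMulVec_sub_vecMulVec_left huu hv'0)
  refine ⟨e₁ p, e₁_ne_zero (hφ.one_le_m.trans hφ.m_le_p), e₁ q,
    e₁_ne_zero (hφ.one_le_n.trans hφ.n_le_q), fun M hM => ?_⟩
  obtain ⟨u', v', rfl⟩ := exists_vecMulVec_of_rowRank_le_one hM
  rcases vecMulVec_mem_cross_or hφ.one_le_m hφ.one_le_n u' v' with hcross | ⟨hu', hv'⟩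
  · rcases hcross with hR | hL
    · obtain ⟨w, hw⟩ := mem_Rvec_iff.1 hR
      exact Or.inl (mem_Rvec_iff.2 ⟨padVec p w, by rw [hw, hφ.map_vecMulVec_e₁]⟩)
    · obtain ⟨w, hw⟩ := mem_Lvec_iff.1 hL
      exact Or.inr (mem_Lvec_iff.2 ⟨padVec q w, by rw [hw, hφ.map_e₁_vecMulVec]⟩)
  · obtain ⟨c', -, h'⟩ := hall u' v' hu' hv'
    exact Or.inl (mem_Rvec_iff.2 ⟨op c' • e₁ p, by rw [h', vecMulVec_smul']⟩)

lemma map_generic (hφ : CrossNormalized φ) (hdeg : ¬ DegZero φ) {u : Fin m → D} {v : Fin n → D}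
    (hu : LinearIndependent Dᵐᵒᵖ ![u, e₁ m]) (hv : LinearIndependent D ![v, e₁ n]) :
    ∃ d : D, d ≠ 0 ∧ φ (u ⊗ᵥ v) = padVec p u ⊗ᵥ d • padVec q v :=
  (hφ.map_generic_cases hu hv).resolve_right fun ⟨_, hc, h⟩ =>
    hdeg (hφ.degZero_of_map_eq_e₁ hu hc h)

lemma map_e₁_vecMulVec_e₁ (hφ : CrossNormalized φ) : φ (e₁ m ⊗ᵥ e₁ n) = e₁ p ⊗ᵥ e₁ q := by
  rw [hφ.map_vecMulVec_e₁, padVec_e₁ hφ.one_le_m]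

section Generic

variable {u : Fin m → D} {v : Fin n → D}

lemma eq_smul_of_map_add_e₁_eq (hφ : CrossNormalized φ) (hu : LinearIndependent Dᵐᵒᵖ ![u, e₁ m])
    (hv : LinearIndependent D ![v, e₁ n]) {d : D}
    (hd : φ (u ⊗ᵥ v) = padVec p u ⊗ᵥ d • padVec q v) {b : Fin q → D}
    (hG : φ (u ⊗ᵥ v + e₁ m ⊗ᵥ e₁ n) = e₁ p ⊗ᵥ e₁ q + padVec p u ⊗ᵥ b) :
    b = d • padVec q v := by
  have hEu : LinearIndependent Dᵐᵒᵖ ![e₁ p, padVec p u] := LinearIndependent.pair_symm_iff.1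
    (hφ.linearIndependent_padVec_e₁_op hu)
  have hv' := hφ.linearIndependent_padVec_e₁ hv
  have hv0 : v ≠ 0 := by simpa using hv.ne_zero 0
  have h₁ := hφ.rowRank_map_sub (A := u ⊗ᵥ v + e₁ m ⊗ᵥ e₁ n) (B := u ⊗ᵥ v) (by
    rw [add_sub_cancel_left]
    exact rowRank_vecMulVec (e₁_ne_zero hφ.one_le_m) (e₁_ne_zero hφ.one_le_n))
  rw [hG, hd, add_sub_assoc, ← vecMulVec_sub] at h₁
  obtain ⟨l, hl⟩ := exists_smul_eq_of_rowRank_vecMulVec_add_le_one hEu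
    (e₁_ne_zero (hφ.one_le_n.trans hφ.n_le_q)) h₁.le
  have h₂ := hφ.rowRank_map_sub (A := u ⊗ᵥ v + e₁ m ⊗ᵥ e₁ n) (B := e₁ m ⊗ᵥ (v + e₁ n)) (by
    rw [show u ⊗ᵥ v + e₁ m ⊗ᵥ e₁ n - e₁ m ⊗ᵥ (v + e₁ n) = (u - e₁ m) ⊗ᵥ v by
      rw [vecMulVec_add, sub_vecMulVec]; abel]
    exact rowRank_vecMulVec (sub_ne_zero.2 (ne_of_linearIndependent_pair hu)) hv0)
  rw [hG, hφ.map_e₁_vecMulVec, padVec_add, padVec_e₁ hφ.one_le_n,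
    show e₁ p ⊗ᵥ e₁ q + padVec p u ⊗ᵥ b - e₁ p ⊗ᵥ (padVec q v + e₁ q) =
      e₁ p ⊗ᵥ (-padVec q v) + padVec p u ⊗ᵥ b by rw [vecMulVec_add, vecMulVec_neg]; abel] at h₂
  obtain ⟨c, hc⟩ := exists_smul_eq_of_rowRank_vecMulVec_add_le_one hEu
    (neg_ne_zero.2 (padVec_ne_zero hφ.n_le_q hv0)) h₂.le
  have hb : b = d • padVec q v + l • e₁ q := sub_eq_iff_eq_add'.1 hl.symm
  obtain rfl : l = 0 := (LinearIndependent.pair_iff.1 hv' (c + d) l (by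
    rw [add_smul, add_assoc, ← hb, ← hc, smul_neg, add_neg_cancel])).2
  rwa [zero_smul, add_zero] at hb

lemma map_add_e₁_eq_zero_of_eq (hφ : CrossNormalized φ) (hu : LinearIndependent Dᵐᵒᵖ ![u, e₁ m])
    (hv : LinearIndependent D ![v, e₁ n]) {d : D} (hd0 : d ≠ 0)
    (hd : φ (u ⊗ᵥ v) = padVec p u ⊗ᵥ d • padVec q v) {a : Fin p → D}
    (hG : φ (u ⊗ᵥ v + e₁ m ⊗ᵥ e₁ n) = e₁ p ⊗ᵥ e₁ q + a ⊗ᵥ e₁ q) :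
    φ (u ⊗ᵥ v + e₁ m ⊗ᵥ e₁ n) = 0 := by
  have hu' := hφ.linearIndependent_padVec_e₁_op hu
  have hv' := hφ.linearIndependent_padVec_e₁ hv
  have hv0 : v ≠ 0 := by simpa using hv.ne_zero 0
  have hue : u + e₁ m ≠ 0 := add_ne_zero_of_linearIndependent_pair hu
  have h₁ := hφ.rowRank_map_sub (A := u ⊗ᵥ v + e₁ m ⊗ᵥ e₁ n) (B := e₁ m ⊗ᵥ (e₁ n - v)) (by
    rw [show u ⊗ᵥ v + e₁ m ⊗ᵥ e₁ n - e₁ m ⊗ᵥ (e₁ n - v) = (u + e₁ m) ⊗ᵥ v by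
      rw [vecMulVec_sub, add_vecMulVec]; abel]
    exact rowRank_vecMulVec hue hv0)
  rw [hG, hφ.map_e₁_vecMulVec, padVec_sub, padVec_e₁ hφ.one_le_n,
    show e₁ p ⊗ᵥ e₁ q + a ⊗ᵥ e₁ q - e₁ p ⊗ᵥ (e₁ q - padVec q v) =
      a ⊗ᵥ e₁ q + e₁ p ⊗ᵥ padVec q v by rw [vecMulVec_sub]; abel] at h₁
  rcases not_linearIndependent_or_of_rowRank_add_le_one h₁.le with ha | hFv
  swap
  · exact absurd (LinearIndependent.pair_symm_iff.1 hv') hFv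
  rw [LinearIndependent.pair_symm_iff] at ha
  obtain ⟨k, rfl⟩ := exists_smul_eq_of_not_linearIndependent_pair
    (e₁_ne_zero (hφ.one_le_m.trans hφ.m_le_p)) ha
  obtain ⟨k, rfl⟩ := MulOpposite.op_surjective k
  rw [← vecMulVec_smul', ← vecMulVec_add, ← one_smul D (e₁ q), smul_smul, mul_one, ← add_smul] at hG
  have h₂ := hφ.rowRank_map_sub (A := u ⊗ᵥ v + e₁ m ⊗ᵥ e₁ n) (B := u ⊗ᵥ v) (by
    rw [add_sub_cancel_left]
    exact rowRank_vecMulVec (e₁_ne_zero hφ.one_le_m) (e₁_ne_zero hφ.one_le_n))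
  rw [hG, hd] at h₂
  rcases not_linearIndependent_or_of_rowRank_sub_le_one h₂.le with hEu | hFv
  · exact absurd (LinearIndependent.pair_symm_iff.1 hu') hEu
  by_cases h1k : 1 + k = 0
  · rw [hG, h1k, zero_smul, vecMulVec_zero_right]
  · rw [LinearIndependent.pair_smul_smul_iff (Ne.isUnit h1k) hd0.isUnit] at hFv
    exact absurd (LinearIndependent.pair_symm_iff.1 hv') hFv

lemma map_add_e₁_eq_or (hφ : CrossNormalized φ) (hu : LinearIndependent Dᵐᵒᵖ ![u, e₁ m])
    (hv : LinearIndependent D ![v, e₁ n]) {d : D} (hd0 : d ≠ 0)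
    (hd : φ (u ⊗ᵥ v) = padVec p u ⊗ᵥ d • padVec q v) :
    φ (u ⊗ᵥ v + e₁ m ⊗ᵥ e₁ n) = e₁ p ⊗ᵥ e₁ q + padVec p u ⊗ᵥ d • padVec q v ∨
      φ (u ⊗ᵥ v + e₁ m ⊗ᵥ e₁ n) = 0 := by
  have hu0 : u ≠ 0 := by simpa using hu.ne_zero 0
  have hv0 : v ≠ 0 := by simpa using hv.ne_zero 0
  have h₀ := hφ.rowRank_map_sub (A := u ⊗ᵥ v + e₁ m ⊗ᵥ e₁ n) (B := e₁ m ⊗ᵥ e₁ n) (by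
    rw [add_sub_cancel_right]
    exact rowRank_vecMulVec hu0 hv0)
  rw [hφ.map_e₁_vecMulVec_e₁] at h₀
  obtain ⟨α, β, -, -, hαβ⟩ := exists_vecMulVec_of_rowRank_eq_one h₀
  have hG : φ (u ⊗ᵥ v + e₁ m ⊗ᵥ e₁ n) = e₁ p ⊗ᵥ e₁ q + α ⊗ᵥ β := by
    rw [← hαβ, add_sub_cancel]
  have h₁ := hφ.rowRank_map_sub (A := u ⊗ᵥ v + e₁ m ⊗ᵥ e₁ n) (B := (u + e₁ m) ⊗ᵥ e₁ n) (by
    rw [show u ⊗ᵥ v + e₁ m ⊗ᵥ e₁ n - (u + e₁ m) ⊗ᵥ e₁ n = u ⊗ᵥ (v - e₁ n) by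
      rw [add_vecMulVec, vecMulVec_sub]; abel]
    exact rowRank_vecMulVec hu0 (sub_ne_zero.2 (ne_of_linearIndependent_pair hv)))
  rw [hG, hφ.map_vecMulVec_e₁, padVec_add, padVec_e₁ hφ.one_le_m,
    show e₁ p ⊗ᵥ e₁ q + α ⊗ᵥ β - (padVec p u + e₁ p) ⊗ᵥ e₁ q =
      α ⊗ᵥ β - padVec p u ⊗ᵥ e₁ q by rw [add_vecMulVec]; abel] at h₁
  rcases not_linearIndependent_or_of_rowRank_sub_le_one h₁.le with hα | hβ
  · rw [LinearIndependent.pair_symm_iff] at hα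
    obtain ⟨s, rfl⟩ := exists_smul_eq_of_not_linearIndependent_pair
      (padVec_ne_zero hφ.m_le_p hu0) hα
    obtain ⟨s, rfl⟩ := MulOpposite.op_surjective s
    rw [← vecMulVec_smul'] at hG
    exact Or.inl (hG.trans (by rw [hφ.eq_smul_of_map_add_e₁_eq hu hv hd hG]))
  · rw [LinearIndependent.pair_symm_iff] at hβ
    obtain ⟨t, rfl⟩ := exists_smul_eq_of_not_linearIndependent_pair
      (e₁_ne_zero (hφ.one_le_n.trans hφ.n_le_q)) hβ
    rw [vecMulVec_smul'] at hG
    exact Or.inr (hφ.map_add_e₁_eq_zero_of_eq hu hv hd0 hd hG)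

/-- The generic matrix `w ⊗ᵥ (v + e₁)`, `w = u ζ + e₁ (1 - ζ)`, is adjacent to
`u ⊗ᵥ v + e₁ ⊗ᵥ e₁`; this is the adjacency of the images in the coordinates `ũ, e₁` and `ṽ, e₁`. -/
lemma exists_rowRank_coeff_eq_one (hφ : CrossNormalized φ) (hdeg : ¬ DegZero φ)
    (hu : LinearIndependent Dᵐᵒᵖ ![u, e₁ m]) (hv : LinearIndependent D ![v, e₁ n]) {d : D}
    (hG : φ (u ⊗ᵥ v + e₁ m ⊗ᵥ e₁ n) = e₁ p ⊗ᵥ e₁ q + padVec p u ⊗ᵥ d • padVec q v)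
    {ζ : D} (hζ0 : ζ ≠ 0) :
    ∃ e : D, e ≠ 0 ∧
      rowRank (padVec p u ⊗ᵥ ((d - ζ * e) • padVec q v + (-(ζ * e)) • e₁ q) +
        e₁ p ⊗ᵥ ((-((1 - ζ) * e)) • padVec q v + (1 - (1 - ζ) * e) • e₁ q)) = 1 := by
  have hw : LinearIndependent Dᵐᵒᵖ ![op ζ • u + op (1 - ζ) • e₁ m, e₁ m] :=
    hu.pair_smul_add_smul_left ((op_ne_zero_iff ζ).2 hζ0) _
  obtain ⟨e, he0, hX⟩ := hφ.map_generic hdeg hw (LinearIndependent.pair_add_left_iff.2 hv)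
  refine ⟨e, he0, ?_⟩
  have hadj := hφ.rowRank_map_sub (A := u ⊗ᵥ v + e₁ m ⊗ᵥ e₁ n)
    (B := (op ζ • u + op (1 - ζ) • e₁ m) ⊗ᵥ (v + e₁ n)) (by
    rw [show u ⊗ᵥ v + e₁ m ⊗ᵥ e₁ n - (op ζ • u + op (1 - ζ) • e₁ m) ⊗ᵥ (v + e₁ n) =
        (u - e₁ m) ⊗ᵥ ((1 - ζ) • v + (-ζ) • e₁ n) by
      ext i j
      simp only [vecMulVec_apply, Matrix.sub_apply, Matrix.add_apply, Pi.add_apply,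
        Pi.sub_apply, Pi.smul_apply, smul_eq_mul, op_smul_eq_mul]
      noncomm_ring]
    refine rowRank_vecMulVec (sub_ne_zero.2 (ne_of_linearIndependent_pair hu)) fun h0 => ?_
    exact hζ0 (neg_eq_zero.1 (LinearIndependent.pair_iff.1 hv _ _ h0).2))
  rwa [hG, hX, padVec_add, padVec_add, padVec_smul, padVec_smul, padVec_e₁ hφ.one_le_m,
    padVec_e₁ hφ.one_le_n,
    show e₁ p ⊗ᵥ e₁ q + padVec p u ⊗ᵥ d • padVec q v -
        (op ζ • padVec p u + op (1 - ζ) • e₁ p) ⊗ᵥ e • (padVec q v + e₁ q) =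
      padVec p u ⊗ᵥ ((d - ζ * e) • padVec q v + (-(ζ * e)) • e₁ q) +
        e₁ p ⊗ᵥ ((-((1 - ζ) * e)) • padVec q v + (1 - (1 - ζ) * e) • e₁ q) by
      ext i j
      simp only [vecMulVec_apply, Matrix.sub_apply, Matrix.add_apply, Pi.add_apply,
        Pi.smul_apply, smul_eq_mul, op_smul_eq_mul]
      noncomm_ring] at hadj

/-- For `d ≠ 1`, the choice `ζ = (1 - d⁻¹)⁻¹` in `exists_rowRank_coeff_eq_one` makes the two
coefficient rows independent. -/
lemma eq_one_of_map_add_e₁_eq (hφ : CrossNormalized φ) (hdeg : ¬ DegZero φ)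
    (hu : LinearIndependent Dᵐᵒᵖ ![u, e₁ m]) (hv : LinearIndependent D ![v, e₁ n]) {d : D}
    (hd0 : d ≠ 0)
    (hG : φ (u ⊗ᵥ v + e₁ m ⊗ᵥ e₁ n) = e₁ p ⊗ᵥ e₁ q + padVec p u ⊗ᵥ d • padVec q v) :
    d = 1 := by
  by_contra hd1
  have h1d : 1 - d⁻¹ ≠ 0 := fun h => hd1 (inv_eq_one.1 (sub_eq_zero.1 h).symm)
  set ζ := (1 - d⁻¹)⁻¹
  have hζ0 : ζ ≠ 0 := inv_ne_zero h1d
  obtain ⟨e, he0, hadj⟩ := hφ.exists_rowRank_coeff_eq_one hdeg hu hv hG hζ0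
  obtain ⟨θ, h₁, h₂⟩ := exists_mul_eq_of_rowRank_le_one (hφ.linearIndependent_padVec_e₁_op hu)
    (hφ.linearIndependent_padVec_e₁ hv) (neg_ne_zero.2 (mul_ne_zero hζ0 he0)) hadj.le
  have hθd : θ * d = -1 := by linear_combination (norm := noncomm_ring) h₂ - h₁
  have hθ : θ = -d⁻¹ := by
    rw [← mul_inv_cancel_right₀ hd0 θ, hθd, neg_one_mul]
  rw [hθ] at h₂
  have key : (1 - (1 - d⁻¹) * ζ) * e = 1 := by linear_combination (norm := noncomm_ring) -h₂
  rw [mul_inv_cancel₀ h1d, sub_self, zero_mul] at key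
  exact zero_ne_one key

lemma map_add_e₁_eq_zero_or_eq_pad (hφ : CrossNormalized φ) (hdeg : ¬ DegZero φ)
    (hu : LinearIndependent Dᵐᵒᵖ ![u, e₁ m]) (hv : LinearIndependent D ![v, e₁ n]) :
    φ (u ⊗ᵥ v + e₁ m ⊗ᵥ e₁ n) = 0 ∨
      φ (u ⊗ᵥ v) = pad p q (u ⊗ᵥ v) ∧
        φ (u ⊗ᵥ v + e₁ m ⊗ᵥ e₁ n) = pad p q (u ⊗ᵥ v + e₁ m ⊗ᵥ e₁ n) := by
  obtain ⟨d, hd0, hd⟩ := hφ.map_generic hdeg hu hv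
  refine (hφ.map_add_e₁_eq_or hu hv hd0 hd).symm.imp_right fun hG => ?_
  obtain rfl := hφ.eq_one_of_map_add_e₁_eq hdeg hu hv hd0 hG
  rw [one_smul] at hd hG
  rw [hd, hG, pad_add, pad_vecMulVec, pad_vecMulVec, padVec_e₁ hφ.one_le_m,
    padVec_e₁ hφ.one_le_n, add_comm (e₁ p ⊗ᵥ e₁ q)]
  exact ⟨rfl, rfl⟩

lemma map_generic_eq_pad (hφ : CrossNormalized φ) (hdeg : ¬ DegZero φ)
    (hu : LinearIndependent Dᵐᵒᵖ ![u, e₁ m]) (hv : LinearIndependent D ![v, e₁ n]) :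
    φ (u ⊗ᵥ v) = pad p q (u ⊗ᵥ v) := by
  refine ((hφ.map_add_e₁_eq_zero_or_eq_pad hdeg hu hv).resolve_left fun h₀ => ?_).1
  have hu0 : u ≠ 0 := by simpa using hu.ne_zero 0
  have hv' : LinearIndependent D ![v + e₁ n, e₁ n] := LinearIndependent.pair_add_left_iff.2 hv
  have h := hφ.rowRank_map_sub (A := u ⊗ᵥ (v + e₁ n) + e₁ m ⊗ᵥ e₁ n)
    (B := u ⊗ᵥ v + e₁ m ⊗ᵥ e₁ n) (by
    rw [show u ⊗ᵥ (v + e₁ n) + e₁ m ⊗ᵥ e₁ n - (u ⊗ᵥ v + e₁ m ⊗ᵥ e₁ n) = u ⊗ᵥ e₁ n by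
      rw [vecMulVec_add]; abel]
    exact rowRank_vecMulVec hu0 (e₁_ne_zero hφ.one_le_n))
  rcases hφ.map_add_e₁_eq_zero_or_eq_pad hdeg hu hv' with h₀' | ⟨-, h'⟩
  · simp [h₀, h₀'] at h
  · rw [h', h₀, sub_zero, pad_add, pad_vecMulVec, pad_vecMulVec, padVec_add,
      padVec_e₁ hφ.one_le_m, padVec_e₁ hφ.one_le_n,
      rowRank_vecMulVec_add_vecMulVec
        (hφ.linearIndependent_padVec_e₁_op hu)
        (LinearIndependent.pair_add_left_iff.2
          (hφ.linearIndependent_padVec_e₁ hv))] at h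
    omega

end Generic

lemma map_eq_pad_of_rowRank_le_one (hφ : CrossNormalized φ) (hdeg : ¬ DegZero φ)
    {M : Matrix (Fin m) (Fin n) D} (hM : rowRank M ≤ 1) : φ M = pad p q M := by
  obtain ⟨u, v, rfl⟩ := exists_vecMulVec_of_rowRank_le_one hM
  rcases vecMulVec_mem_cross_or hφ.one_le_m hφ.one_le_n u v with hcross | ⟨hu, hv⟩
  · exact hφ.eq_pad _ hcross
  · exact hφ.map_generic_eq_pad hdeg hu hv

lemma rowRank_map_sub_pad_add_pad (hφ : CrossNormalized φ) {r : ℕ}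
    (hlow : ∀ B : Matrix (Fin m) (Fin n) D, rowRank B < r → φ B = pad p q B)
    {M X : Matrix (Fin m) (Fin n) D} (hX : rowRank X = 1) (hMX : rowRank (M - X) < r) :
    rowRank (φ M - pad p q M + pad p q X) = 1 := by
  have h := hφ.rowRank_map_sub (A := M) (B := M - X) (by rwa [sub_sub_cancel])
  rwa [hlow _ hMX, pad_sub, ← sub_add] at h

lemma map_eq_pad_or_eq_zero_of_rowRank_eq_two (hφ : CrossNormalized φ) (hdeg : ¬ DegZero φ)
    {u w : Fin m → D} {x y : Fin n → D} (huw : LinearIndependent Dᵐᵒᵖ ![u, w])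
    (hxy : LinearIndependent D ![x, y]) :
    φ (u ⊗ᵥ x + w ⊗ᵥ y) = pad p q (u ⊗ᵥ x + w ⊗ᵥ y) ∨ φ (u ⊗ᵥ x + w ⊗ᵥ y) = 0 := by
  have hlow : ∀ B : Matrix (Fin m) (Fin n) D, rowRank B < 2 → φ B = pad p q B :=
    fun B hB => hφ.map_eq_pad_of_rowRank_le_one hdeg (by omega)
  refine (eq_zero_or_eq_neg_pad_of_forall_rowRank_add_pad hφ.m_le_p hφ.n_le_q huw hxy
    fun X hX hMX => hφ.rowRank_map_sub_pad_add_pad hlow hX (by omega)).imp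
    sub_eq_zero.1 fun h => ?_
  rwa [sub_eq_neg_self] at h

lemma map_eq_pad_of_rowRank_eq_two (hφ : CrossNormalized φ) (hdeg : ¬ DegZero φ)
    {M : Matrix (Fin m) (Fin n) D} (hM : rowRank M = 2) : φ M = pad p q M := by
  obtain ⟨u, w, x, y, rfl, huw, hxy⟩ := exists_vecMulVec_add_vecMulVec hM
  refine (hφ.map_eq_pad_or_eq_zero_of_rowRank_eq_two hdeg huw hxy).resolve_right fun h₀ => ?_
  have hxy₂ : LinearIndependent D ![x + y, y] := LinearIndependent.pair_add_left_iff.2 hxy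
  have h := hφ.rowRank_map_sub (A := u ⊗ᵥ (x + y) + w ⊗ᵥ y) (B := u ⊗ᵥ x + w ⊗ᵥ y) (by
    rw [vecMulVec_add, add_sub_add_right_eq_sub, add_sub_cancel_left]
    exact rowRank_vecMulVec (by simpa using huw.ne_zero 0) (by simpa using hxy.ne_zero 1))
  rcases hφ.map_eq_pad_or_eq_zero_of_rowRank_eq_two hdeg huw hxy₂ with h' | h₀'
  · rw [h', h₀, sub_zero, pad_add, pad_vecMulVec, pad_vecMulVec, padVec_add,
      rowRank_vecMulVec_add_vecMulVec ((linearIndependent_padVec_pair_iff hφ.m_le_p).2 huw)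
        (LinearIndependent.pair_add_left_iff.2
          ((linearIndependent_padVec_pair_iff hφ.n_le_q).2 hxy))] at h
    omega
  · simp [h₀, h₀'] at h

/-- The defect `φ M - pad M` is both `ã₀ ⊗ᵥ z₀` and `ã₁ ⊗ᵥ z₁`, hence zero. -/
lemma map_eq_pad_of_three_le_rowRank (hφ : CrossNormalized φ) {r : ℕ} (hr : 3 ≤ r)
    (hlow : ∀ B : Matrix (Fin m) (Fin n) D, rowRank B < r → φ B = pad p q B)
    {M : Matrix (Fin m) (Fin n) D} (hM : rowRank M = r) : φ M = pad p q M := by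
  obtain ⟨a, b, rfl, ha, hb⟩ := exists_sum_vecMulVec M hM
  have hW := fun X (hX : rowRank X = 1) =>
    hφ.rowRank_map_sub_pad_add_pad hlow (M := ∑ j, a j ⊗ᵥ b j) hX
  have h01 : (⟨0, by omega⟩ : Fin r) ≠ ⟨1, by omega⟩ := by simp
  have h02 : (⟨0, by omega⟩ : Fin r) ≠ ⟨2, by omega⟩ := by simp
  have h12 : (⟨1, by omega⟩ : Fin r) ≠ ⟨2, by omega⟩ := by simp
  obtain ⟨z₀, hz₀⟩ := exists_eq_vecMulVec_of_forall_rowRank_add_pad hφ.m_le_p hφ.n_le_q ha hb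
    hW h01.symm h02.symm h12
  obtain ⟨z₁, hz₁⟩ := exists_eq_vecMulVec_of_forall_rowRank_add_pad hφ.m_le_p hφ.n_le_q ha hb
    hW h01 h12.symm h02
  have hz : z₀ = 0 := (eq_zero_of_vecMulVec_eq
    ((linearIndependent_padVec_pair_iff hφ.m_le_p).2 (ha.pair_of_ne h01))
    (hz₀.symm.trans hz₁)).1
  rw [← sub_eq_zero, hz₀, hz, vecMulVec_zero_right]

end CrossNormalized

end Normalized

theorem stmt13_general (m n p q : ℕ) (hm : 2 ≤ m) (hn : 2 ≤ n) (hmp : m ≤ p) (hnq : n ≤ q)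
    (φ : Matrix (Fin m) (Fin n) D → Matrix (Fin p) (Fin q) D)
    (hφ : ∀ A B, Adjacent A B → Adjacent (φ A) (φ B))
    (hdeg : ¬ DegZero φ)
    (h : ∀ M : Matrix (Fin m) (Fin n) D,
      M ∈ Rvec (fun j : Fin n => if (j : ℕ) = 0 then (1 : D) else 0) ∪
          Lvec (fun i : Fin m => if (i : ℕ) = 0 then (1 : D) else 0) →
      φ M = pad p q M) :
    ∀ M : Matrix (Fin m) (Fin n) D, φ M = pad p q M := by
  have hφ' : CrossNormalized φ := ⟨by omega, by omega, hmp, hnq, hφ, h⟩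
  suffices ∀ r (M : Matrix (Fin m) (Fin n) D), rowRank M = r → φ M = pad p q M from
    fun M => this _ M rfl
  intro r
  induction r using Nat.strong_induction_on with
  | _ r ih =>
    intro M hM
    rcases (by omega : r ≤ 1 ∨ r = 2 ∨ 3 ≤ r) with h1 | rfl | h3
    · exact hφ'.map_eq_pad_of_rowRank_le_one hdeg (hM ▸ h1)
    · exact hφ'.map_eq_pad_of_rowRank_eq_two hdeg hM
    · exact hφ'.map_eq_pad_of_three_le_rowRank h3 (fun B hB => ih _ hB B rfl) hM

/-- Lemma 3.16. -/
theorem stmt13 (hEAS : EAS D) (m n p q : ℕ) (hm : 2 ≤ m) (hn : 2 ≤ n) (hp : 2 ≤ p)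
    (hq : 2 ≤ q) (hmp : m ≤ p) (hnq : n ≤ q)
    (φ : Matrix (Fin m) (Fin n) D → Matrix (Fin p) (Fin q) D)
    (hφ : ∀ A B, Adjacent A B → Adjacent (φ A) (φ B))
    (hdeg : ¬ DegZero φ)
    (h : ∀ M : Matrix (Fin m) (Fin n) D,
      M ∈ Rvec (fun j : Fin n => if (j : ℕ) = 0 then (1 : D) else 0) ∪
          Lvec (fun i : Fin m => if (i : ℕ) = 0 then (1 : D) else 0) →
      φ M = pad p q M) :
    ∀ M : Matrix (Fin m) (Fin n) D, φ M = pad p q M :=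
  stmt13_general m n p q hm hn hmp hnq φ hφ hdeg h
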